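/- In the one-variable Weyl algebra, q₁^i ⋆ p₁^j = (−1)^j (j!/2^j) L_j^{(i−j)}(2 p₁ q₁) · q₁^{i−j} when i ≥ j, and q₁^i ⋆ p₁^j = (−1)^i (i!/2^i) L_i^{(j−i)}(2 p₁ q₁) · p₁^{j−i} when i ≤ j, where L_β^{(α)} is the generalized Laguerre polynomial. -/

import Mathlib

open MvPolynomial

noncomputable section

variable {K : Type*} [Field K] [CharZero K] {n : ℕ}
set_option linter.unusedSectionVars false

/-- Variable index set for `S = K[p₁,q₁,…,pₙ,qₙ]`: `inl i` is `pᵢ`, `inr i` is `qᵢ`. -/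
abbrev Idx (n : ℕ) := Sum (Fin n) (Fin n)

/-- The variable `pᵢ`. -/
def pV (n : ℕ) (K : Type*) [Field K] (i : Fin n) : MvPolynomial (Idx n) K := X (Sum.inl i)

/-- The variable `qᵢ`. -/
def qV (n : ℕ) (K : Type*) [Field K] (i : Fin n) : MvPolynomial (Idx n) K := X (Sum.inr i)

/-- Left factor of one summand of `℘^k (F ⊗ G)`: for each `j : Fin k` we chose
`(i, true)` (the term `∂/∂pᵢ ⊗ ∂/∂qᵢ`) or `(i, false)` (the term `∂/∂qᵢ ⊗ ∂/∂pᵢ`). -/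
def derivsL {k : ℕ} (v : Fin k → Fin n × Bool) (F : MvPolynomial (Idx n) K) :
    MvPolynomial (Idx n) K :=
  (List.finRange k).foldl
    (fun F j => pderiv (if (v j).2 then Sum.inl (v j).1 else Sum.inr (v j).1) F) F

/-- Right factor of one summand of `℘^k (F ⊗ G)`. -/
def derivsR {k : ℕ} (v : Fin k → Fin n × Bool) (G : MvPolynomial (Idx n) K) :
    MvPolynomial (Idx n) K :=
  (List.finRange k).foldl
    (fun G j => pderiv (if (v j).2 then Sum.inr (v j).1 else Sum.inl (v j).1) G) G

/-- Moyal coefficient `C_k(F,G) = (1/(2^k k!)) (m ∘ ℘^k)(F ⊗ G)`, with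
`℘(F ⊗ G) = Σᵢ (∂F/∂pᵢ ⊗ ∂G/∂qᵢ − ∂F/∂qᵢ ⊗ ∂G/∂pᵢ)` expanded multinomially. -/
def moyalC (k : ℕ) (F G : MvPolynomial (Idx n) K) : MvPolynomial (Idx n) K :=
  ((2 ^ k * Nat.factorial k : ℕ) : K)⁻¹ •
    ∑ v : Fin k → Fin n × Bool,
      (∏ j : Fin k, if (v j).2 then (1 : K) else -1) • (derivsL v F * derivsR v G)

/-- The Moyal star product at `t = 1`: `F ⋆ G = Σ_{k ≥ 0} C_k(F,G)`; the sum is finite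
since `C_k(F,G) = 0` as soon as `k` exceeds the total degree of `F`. -/
def mstar (F G : MvPolynomial (Idx n) K) : MvPolynomial (Idx n) K :=
  ∑ k ∈ Finset.range (F.totalDegree + 1), moyalC k F G

/-- The Poisson bracket `{F,G} = Σᵢ (∂F/∂pᵢ ∂G/∂qᵢ − ∂F/∂qᵢ ∂G/∂pᵢ)`. -/
def poisson (F G : MvPolynomial (Idx n) K) : MvPolynomial (Idx n) K :=
  ∑ i : Fin n,
    (pderiv (Sum.inl i) F * pderiv (Sum.inr i) G -
      pderiv (Sum.inr i) F * pderiv (Sum.inl i) G)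

/-- The supertrace `Str F = F(0)`, evaluation at the origin. -/
def Str (F : MvPolynomial (Idx n) K) : K := eval (fun _ => 0) F

/-- The generalized Laguerre polynomial
`L_β^{(α)}(y) = Σ_{k=0}^{β} (−1)^k C(β+α, β−k) y^k / k!`, evaluated at a polynomial. -/
def lag (β α : ℕ) (y : MvPolynomial (Idx 1) K) : MvPolynomial (Idx 1) K :=
  ∑ k ∈ Finset.range (β + 1),
    (((-1 : K) ^ k * (Nat.choose (β + α) (β - k) : K)) / (Nat.factorial k : K)) • y ^ k



lemma foldl_pderiv_smul {ι : Type*} (l : List ι) (g : ι → Idx n) (c : K)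
    (F : MvPolynomial (Idx n) K) :
    l.foldl (fun F j => pderiv (g j) F) (c • F)
      = c • l.foldl (fun F j => pderiv (g j) F) F := by
  induction l generalizing F with
  | nil => rfl
  | cons a t ih =>
    rw [List.foldl_cons, List.foldl_cons, (pderiv (g a)).map_smul, ih]

lemma foldl_pderiv_zero {ι : Type*} (l : List ι) (g : ι → Idx n) :
    l.foldl (fun F j => pderiv (g j) F) (0 : MvPolynomial (Idx n) K) = 0 := by
  induction l with
  | nil => rfl
  | cons a t ih => rw [List.foldl_cons, map_zero]; exact ih

lemma nat_desc_key (i k : ℕ) : i * (i-1).descFactorial k = i.descFactorial (k+1) := by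
  cases i with
  | zero => simp
  | succ m => rw [Nat.succ_descFactorial_succ]; simp

lemma foldl_pderiv_X_pow (k : ℕ) (s : Fin k → Idx n) (t : Idx n) (i : ℕ) :
    (List.finRange k).foldl (fun F j => pderiv (s j) F) ((X t : MvPolynomial (Idx n) K) ^ i)
      = if ∀ j, s j = t then ((i.descFactorial k : ℕ) : K) • X t ^ (i - k) else 0 := by
  induction k generalizing i with
  | zero => simp
  | succ k ih =>
    rw [List.finRange_succ, List.foldl_cons, List.foldl_map]
    by_cases h0 : s 0 = t
    · have hd : pderiv (s 0) ((X t : MvPolynomial (Idx n) K) ^ i)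
          = (i : K) • (X t : MvPolynomial (Idx n) K) ^ (i - 1) := by
        rw [h0, pderiv_pow, pderiv_X_self, mul_one]
        rw [← C_eq_coe_nat, ← smul_eq_C_mul]
      rw [hd, foldl_pderiv_smul, ih]
      have hcond : (∀ j : Fin (k+1), s j = t) ↔ (∀ j : Fin k, s j.succ = t) := by
        constructor
        · intro h j; exact h j.succ
        · intro h j
          refine Fin.cases h0 (fun j => h j) j
      by_cases hc : ∀ j : Fin k, s j.succ = t
      · rw [if_pos hc, if_pos (hcond.mpr hc), smul_smul]
        have : (i : K) * ((i-1).descFactorial k : K) = (i.descFactorial (k+1) : K) := by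
          rw [← nat_desc_key]; push_cast; ring
        rw [this, show i - 1 - k = i - (k+1) by omega]
      · rw [if_neg hc, if_neg (fun h => hc (hcond.mp h)), smul_zero]
    · have hd : pderiv (s 0) ((X t : MvPolynomial (Idx n) K) ^ i) = 0 := by
        rw [pderiv_pow]
        classical
        rw [pderiv_X]
        simp [Pi.single_apply, Ne.symm h0]
      rw [hd, if_neg (fun h => h0 (h 0))]
      exact foldl_pderiv_zero _ _

lemma derivsL_qpow (k : ℕ) (v : Fin k → Fin 1 × Bool) (i : ℕ) :
    derivsL (K := K) v ((qV 1 K 0) ^ i)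
      = if ∀ j, (v j).2 = false then ((i.descFactorial k : ℕ) : K) • (qV 1 K 0) ^ (i - k)
        else 0 := by
  have h := foldl_pderiv_X_pow (K := K) k
    (fun j => if (v j).2 then Sum.inl (v j).1 else Sum.inr (v j).1) (Sum.inr 0) i
  rw [derivsL, qV, h]
  have hiff : (∀ j : Fin k, (if (v j).2 then (Sum.inl (v j).1 : Idx 1) else Sum.inr (v j).1)
      = Sum.inr 0) ↔ (∀ j, (v j).2 = false) := by
    refine forall_congr' fun j => ?_
    cases hb : (v j).2 <;> simp [hb, Subsingleton.elim (v j).1 0]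
  simp only [hiff]

lemma derivsR_ppow (k : ℕ) (v : Fin k → Fin 1 × Bool) (j : ℕ) :
    derivsR (K := K) v ((pV 1 K 0) ^ j)
      = if ∀ m, (v m).2 = false then ((j.descFactorial k : ℕ) : K) • (pV 1 K 0) ^ (j - k)
        else 0 := by
  have h := foldl_pderiv_X_pow (K := K) k
    (fun m => if (v m).2 then Sum.inr (v m).1 else Sum.inl (v m).1) (Sum.inl 0) j
  rw [derivsR, pV, h]
  have hiff : (∀ m : Fin k, (if (v m).2 then (Sum.inr (v m).1 : Idx 1) else Sum.inl (v m).1)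
      = Sum.inl 0) ↔ (∀ m, (v m).2 = false) := by
    refine forall_congr' fun m => ?_
    cases hb : (v m).2 <;> simp [hb, Subsingleton.elim (v m).1 0]
  simp only [hiff]

lemma moyalC_qp (i j k : ℕ) :
    moyalC (K := K) k ((qV 1 K 0) ^ i) ((pV 1 K 0) ^ j)
      = (((2 ^ k * Nat.factorial k : ℕ) : K)⁻¹ * (-1) ^ k * (i.descFactorial k)
            * (j.descFactorial k))
          • ((pV 1 K 0) ^ (j - k) * (qV 1 K 0) ^ (i - k)) := by
  rw [moyalC]
  rw [Finset.sum_eq_single (fun _ => ((0 : Fin 1), false))]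
  · rw [derivsL_qpow, derivsR_ppow, if_pos (fun _ => rfl), if_pos (fun _ => rfl)]
    simp only [if_neg Bool.false_ne_true, Finset.prod_const, Finset.card_univ,
      Fintype.card_fin]
    rw [smul_mul_assoc, mul_smul_comm, smul_smul, smul_smul, smul_smul]
    rw [mul_comm ((qV 1 K 0) ^ (i-k)) ((pV 1 K 0) ^ (j-k))]
  · intro v _ hv
    have : ¬ (∀ m, (v m).2 = false) := by
      intro hall
      apply hv
      funext m
      exact Prod.ext (Subsingleton.elim _ _) (hall m)
    rw [derivsL_qpow, if_neg this, zero_mul, smul_zero]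
  · intro h
    exact absurd (Finset.mem_univ _) h


lemma mstar_qp (i j : ℕ) :
    mstar ((qV 1 K 0) ^ i) ((pV 1 K 0) ^ j)
      = ∑ k ∈ Finset.range (i + 1),
          (((2 ^ k * Nat.factorial k : ℕ) : K)⁻¹ * (-1) ^ k * (i.descFactorial k)
            * (j.descFactorial k)) • ((pV 1 K 0) ^ (j - k) * (qV 1 K 0) ^ (i - k)) := by
  rw [mstar]
  rw [show ((qV 1 K 0 : MvPolynomial (Idx 1) K) ^ i).totalDegree = i from by
    rw [qV]; exact totalDegree_X_pow _ _]
  exact Finset.sum_congr rfl fun k _ => moyalC_qp i j k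

/-- In `W(1)`: `q₁^i ⋆ p₁^j = (−1)^j (j!/2^j) L_j^{(i−j)}(2p₁q₁) q₁^{i−j}` for `i ≥ j`,
and `q₁^i ⋆ p₁^j = (−1)^i (i!/2^i) L_i^{(j−i)}(2p₁q₁) p₁^{j−i}` for `i ≤ j`. -/
theorem stmt19 (i j : ℕ) :
    (j ≤ i → mstar ((qV 1 K 0) ^ i) ((pV 1 K 0) ^ j) =
      ((-1 : K) ^ j * (Nat.factorial j : K) / 2 ^ j) •
        (lag j (i - j) (2 • (pV 1 K 0 * qV 1 K 0)) * (qV 1 K 0) ^ (i - j))) ∧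
    (i ≤ j → mstar ((qV 1 K 0) ^ i) ((pV 1 K 0) ^ j) =
      ((-1 : K) ^ i * (Nat.factorial i : K) / 2 ^ i) •
        (lag i (j - i) (2 • (pV 1 K 0 * qV 1 K 0)) * (pV 1 K 0) ^ (j - i))) := by
  constructor
  · intro hji
    rw [mstar_qp]
    rw [← Finset.sum_subset (Finset.range_subset_range.mpr (by omega : j + 1 ≤ i + 1))
      (fun k _ hk => by
        have : j < k := by simp only [Finset.mem_range, not_lt] at hk; omega
        rw [Nat.descFactorial_of_lt this]
        simp)]
    rw [lag, Finset.sum_mul, Finset.smul_sum, ← Finset.sum_range_reflect]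
    refine Finset.sum_congr rfl fun k hk => ?_
    have hk' : k ≤ j := by simpa using Nat.lt_succ_iff.mp (Finset.mem_range.mp hk)
    have e1 : j + (i - j) = i := by omega
    have e2 : j - (j - k) = k := by omega
    rw [show j + 1 - 1 - k = j - k from by omega, e1, e2, smul_pow, mul_pow,
      ← Nat.cast_smul_eq_nsmul K]
    simp only [smul_mul_assoc, mul_smul_comm, smul_smul]
    rw [show (pV 1 K 0) ^ k * (qV 1 K 0) ^ k * (qV 1 K 0) ^ (i - j)
        = (pV 1 K 0) ^ k * (qV 1 K 0) ^ (i - (j - k)) from by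
      rw [mul_assoc, ← pow_add]; congr 2; omega]
    congr 1
    have hk0 : (Nat.factorial k : K) ≠ 0 := by exact_mod_cast k.factorial_ne_zero
    have hjk0 : (Nat.factorial (j-k) : K) ≠ 0 := by exact_mod_cast (j-k).factorial_ne_zero
    have hf1 : (Nat.descFactorial i (j-k) : K)
        = (Nat.factorial (j-k) : K) * (Nat.choose i (j-k) : K) := by
      rw [← Nat.cast_mul, ← Nat.descFactorial_eq_factorial_mul_choose]
    have hf2 : (Nat.descFactorial j (j-k) : K) = (Nat.factorial j : K) / (Nat.factorial k : K) := by
      have h := Nat.factorial_mul_descFactorial (show j - k ≤ j from by omega)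
      rw [show j - (j - k) = k from by omega] at h
      rw [eq_div_iff hk0, mul_comm, ← Nat.cast_mul, h]
    have hsign : ((-1 : K)) ^ j = (-1) ^ (j-k) * (-1) ^ k := by
      rw [← pow_add]; congr 1; omega
    have h2 : (2 : K) ^ j = 2 ^ (j-k) * 2 ^ k := by rw [← pow_add]; congr 1; omega
    push_cast
    rw [hf1, hf2, h2]
    rcases Nat.even_or_odd k with hek | hek
    · rw [show ((-1:K)) ^ j = (-1) ^ (j-k) from by rw [hsign, hek.neg_one_pow, mul_one],
        hek.neg_one_pow]
      field_simp
    · rw [show ((-1:K)) ^ j = -(-1) ^ (j-k) from by rw [hsign, hek.neg_one_pow, mul_neg_one],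
        hek.neg_one_pow]
      field_simp
  · intro hij
    rw [mstar_qp]
    rw [lag, Finset.sum_mul, Finset.smul_sum, ← Finset.sum_range_reflect]
    refine Finset.sum_congr rfl fun k hk => ?_
    have hk' : k ≤ i := by simpa using Nat.lt_succ_iff.mp (Finset.mem_range.mp hk)
    have e1 : i + (j - i) = j := by omega
    have e2 : i - (i - k) = k := by omega
    rw [show i + 1 - 1 - k = i - k from by omega, e1, e2, smul_pow, mul_pow,
      ← Nat.cast_smul_eq_nsmul K]
    simp only [smul_mul_assoc, mul_smul_comm, smul_smul]
    rw [show (pV 1 K 0) ^ k * (qV 1 K 0) ^ k * (pV 1 K 0) ^ (j - i)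
        = (pV 1 K 0) ^ (j - (i - k)) * (qV 1 K 0) ^ k from by
      rw [mul_right_comm, ← pow_add, show k + (j - i) = j - (i - k) from by omega]]
    congr 1
    have hk0 : (Nat.factorial k : K) ≠ 0 := by exact_mod_cast k.factorial_ne_zero
    have hik0 : (Nat.factorial (i-k) : K) ≠ 0 := by exact_mod_cast (i-k).factorial_ne_zero
    have hf1 : (Nat.descFactorial j (i-k) : K)
        = (Nat.factorial (i-k) : K) * (Nat.choose j (i-k) : K) := by
      rw [← Nat.cast_mul, ← Nat.descFactorial_eq_factorial_mul_choose]
    have hf2 : (Nat.descFactorial i (i-k) : K) = (Nat.factorial i : K) / (Nat.factorial k : K) := by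
      have h := Nat.factorial_mul_descFactorial (show i - k ≤ i from by omega)
      rw [show i - (i - k) = k from by omega] at h
      rw [eq_div_iff hk0, mul_comm, ← Nat.cast_mul, h]
    have hsign : ((-1 : K)) ^ i = (-1) ^ (i-k) * (-1) ^ k := by
      rw [← pow_add]; congr 1; omega
    have h2 : (2 : K) ^ i = 2 ^ (i-k) * 2 ^ k := by rw [← pow_add]; congr 1; omega
    push_cast
    rw [hf1, hf2, h2]
    rcases Nat.even_or_odd k with hek | hek
    · rw [show ((-1:K)) ^ i = (-1) ^ (i-k) from by rw [hsign, hek.neg_one_pow, mul_one],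
        hek.neg_one_pow]
      field_simp
    · rw [show ((-1:K)) ^ i = -(-1) ^ (i-k) from by rw [hsign, hek.neg_one_pow, mul_neg_one],
        hek.neg_one_pow]
      field_simp

end
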